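/- For every n ≥ 1 and every almost-sure winning strategy σ for Reach({target}) in the POMDP F(n), the probability under σ of reaching the state target within the first p*_n steps is at most (1/2)·(1/2)^{p*_n}, where p*_n = ∏_{i=1}^n p(i) is the product of the first n primes. -/

import Mathlib

open Finset Filter
open scoped Classical

noncomputable section

/-- A finite history of a play: the current state together with the
(reversed) list of past steps; an entry `(a, s')` means: the action `a`
was taken from the state `s'` (leading to the next recorded state). -/
abbrev Hist (S A : Type) := S × List (A × S)

/-- The observation–action sequence of a history. -/
def obsHist {S A Z : Type} (O : S → Z) (h : Hist S A) : Z × List (A × Z) :=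
  (O h.1, h.2.map fun p => (p.1, O p.2))

/-- An observation-based (randomized, history-dependent) strategy. -/
structure Strategy (S A Z : Type) [Fintype A] (O : S → Z) where
  act : Hist S A → A → ℝ
  act_nonneg : ∀ h a, 0 ≤ act h a
  act_sum : ∀ h, ∑ a, act h a = 1
  obsBased : ∀ h h', obsHist O h = obsHist O h' → act h = act h'

/-- A partially observable Markov decision process. -/
structure POMDP (S A Z : Type) [Fintype S] [Fintype A] [Fintype Z] where
  δ : S → A → S → ℝ
  δ_nonneg : ∀ s a s', 0 ≤ δ s a s'
  δ_sum : ∀ s a, ∑ s', δ s a s' = 1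
  obs : S → Z
  init : S → ℝ
  init_nonneg : ∀ s, 0 ≤ init s
  init_sum : ∑ s, init s = 1
  init_obs : ∀ s s', 0 < init s → 0 < init s' → obs s = obs s'

namespace POMDP

variable {S A Z : Type} [Fintype S] [Fintype A] [Fintype Z]

/-- The target set `T` consists of absorbing states. -/
def Absorbing (M : POMDP S A Z) (T : Set S) : Prop :=
  ∀ t ∈ T, ∀ a, M.δ t a t = 1

/-- Probability that after `n` steps the process has followed exactly the
history `(s, l)` (so `l` has length `n`). -/
def hprobAux (M : POMDP S A Z) (σ : Strategy S A Z M.obs) : ℕ → S → List (A × S) → ℝ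
  | 0, s, l => if l = [] then M.init s else 0
  | n+1, s, l =>
    match l with
    | [] => 0
    | (a, s') :: rest => hprobAux M σ n s' rest * σ.act (s', rest) a * M.δ s' a s

def hprob (M : POMDP S A Z) (σ : Strategy S A Z M.obs) (n : ℕ) (h : Hist S A) : ℝ :=
  M.hprobAux σ n h.1 h.2

/-- The state sequence of a history visits the set `T`. -/
def visitsT (T : Set S) (h : Hist S A) : Prop :=
  h.1 ∈ T ∨ ∃ p ∈ h.2, p.2 ∈ T

/-- Probability of reaching `T` within the first `n` steps. -/
def probReachBy (M : POMDP S A Z) (T : Set S) (σ : Strategy S A Z M.obs) (n : ℕ) : ℝ :=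
  ∑' h : Hist S A, if visitsT T h then M.hprob σ n h else 0

/-- Probability of the reachability objective `Reach(T)`. -/
def probReach (M : POMDP S A Z) (T : Set S) (σ : Strategy S A Z M.obs) : ℝ :=
  ⨆ n, M.probReachBy T σ n

/-- The strategy `σ` is almost-sure winning for `Reach(T)`. -/
def AlmostSure (M : POMDP S A Z) (T : Set S) (σ : Strategy S A Z M.obs) : Prop :=
  M.probReach T σ = 1

/-- Accumulated cost along a history. -/
def totalCostAux (c : S → A → ℝ) : S → List (A × S) → ℝ
  | _, [] => 0
  | _, (a, s') :: rest => totalCostAux c s' rest + c s' a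

def totalCostH (c : S → A → ℝ) (h : Hist S A) : ℝ := totalCostAux c h.1 h.2

/-- Expected total cost of the first `n` steps, i.e. `E[Total_{n-1}]`
(in particular `E[Total_k] = expTotalSteps M c σ (k+1)`). -/
def expTotalSteps (M : POMDP S A Z) (c : S → A → ℝ) (σ : Strategy S A Z M.obs) (n : ℕ) : ℝ :=
  ∑' h : Hist S A, M.hprob σ n h * totalCostH c h

/-- The value `Val(σ) = E[Total]` of a strategy, as the limit (limsup) of the
expected costs of the finite prefixes. -/
def Val (M : POMDP S A Z) (c : S → A → ℝ) (σ : Strategy S A Z M.obs) : EReal :=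
  Filter.limsup (fun n => ((M.expTotalSteps c σ n : ℝ) : EReal)) Filter.atTop

/-- `optCost`: the infimum of the values of almost-sure winning strategies. -/
def optCost (M : POMDP S A Z) (T : Set S) (c : S → A → ℝ) : EReal :=
  ⨅ σ : {σ : Strategy S A Z M.obs // M.AlmostSure T σ}, M.Val c σ.1

end POMDP

def dirac {X : Type} [DecidableEq X] (x : X) : X → ℝ := fun y => if y = x then 1 else 0

lemma dirac_nonneg {X : Type} [DecidableEq X] (x y : X) : 0 ≤ dirac x y := by
  unfold dirac; split_ifs <;> norm_num

lemma dirac_sum {X : Type} [Fintype X] [DecidableEq X] (x : X) : ∑ y, dirac x y = 1 := by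
  simp [dirac]

/-- The half-half mixture of the Dirac distributions at `x` and `y`. -/
def mix2 {X : Type} [DecidableEq X] (x y : X) : X → ℝ :=
  fun t => (if t = x then (1 : ℝ)/2 else 0) + (if t = y then (1 : ℝ)/2 else 0)

lemma mix2_nonneg {X : Type} [DecidableEq X] (x y t : X) : 0 ≤ mix2 x y t := by
  unfold mix2; split_ifs <;> norm_num

lemma mix2_sum {X : Type} [Fintype X] [DecidableEq X] (x y : X) : ∑ t, mix2 x y t = 1 := by
  unfold mix2
  rw [Finset.sum_add_distrib]
  simp
  norm_num

/-- `pr i` is the `(i+1)`-st prime number, i.e. `p(i+1)` in the paper. -/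
def pr (i : ℕ) : ℕ := Nat.nth Nat.Prime i

lemma pr_pos (i : ℕ) : 0 < pr i := (Nat.prime_nth_prime i).pos

/-- `p*_n`, the product of the first `n` primes. -/
def pstar (n : ℕ) : ℕ := ∏ i ∈ Finset.range n, pr i

/-- States of the POMDP `F(n)`: the loop states `q^i_j`, and
`s0 = inr 0`, `bad = inr 1`, `target = inr 2`. -/
abbrev FSt (n : ℕ) := (Σ i : Fin n, Fin (pr i)) ⊕ Fin 3

/-- Transition function of `F(n)`; the action `a` is `true`, `#` is `false`. -/
def Fδ (n : ℕ) : FSt n → Bool → FSt n → ℝ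
  | Sum.inr i, act =>
      if i = 0 then
        (if act then dirac (Sum.inr 1)
         else fun t =>
           match t with
           | Sum.inl ⟨_, j⟩ => if j.val = 0 then ((n : ℝ))⁻¹ else 0
           | Sum.inr _ => 0)
      else if i = 1 then dirac (Sum.inr 1) else dirac (Sum.inr 2)
  | Sum.inl ⟨i, j⟩, act =>
      if act then
        mix2 (Sum.inl ⟨i, ⟨(j.val + 1) % pr i, Nat.mod_lt _ j.pos⟩⟩) (Sum.inr 0)
      else if j.val = pr i - 1 then mix2 (Sum.inr 2) (Sum.inr 0)
      else dirac (Sum.inr 1)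

lemma Fδ_nonneg (n : ℕ) (st : FSt n) (act : Bool) (t : FSt n) : 0 ≤ Fδ n st act t := by
  rcases st with ⟨i, j⟩ | i <;> simp only [Fδ] <;> (try split_ifs) <;>
    first
      | exact mix2_nonneg _ _ _
      | exact dirac_nonneg _ _
      | (rcases t with ⟨i', j'⟩ | i' <;> simp only [] <;> (try split_ifs) <;> positivity)

lemma Fδ_unif_sum (n : ℕ) (hn : 0 < n) :
    (∑ t : FSt n, (fun t =>
      match t with
      | Sum.inl ⟨_, j⟩ => if j.val = 0 then ((n : ℝ))⁻¹ else 0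
      | Sum.inr _ => 0) t) = 1 := by
  rw [Fintype.sum_sum_type]
  have h2 : ∑ i : Fin 3, (0 : ℝ) = 0 := by simp
  have h1 : ∀ p : (Σ i : Fin n, Fin (pr i)),
      (match (Sum.inl p : FSt n) with
        | Sum.inl ⟨_, j⟩ => if j.val = 0 then ((n : ℝ))⁻¹ else 0
        | Sum.inr _ => (0:ℝ)) = if p.2.val = 0 then ((n : ℝ))⁻¹ else 0 := by
    intro ⟨i, j⟩; rfl
  rw [Finset.sum_congr rfl fun p _ => h1 p]
  have h3 : ∑ p : (Σ i : Fin n, Fin (pr i)), (if p.2.val = 0 then ((n : ℝ))⁻¹ else 0) = 1 := by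
    rw [← Finset.univ_sigma_univ, Finset.sum_sigma]
    have hinner : ∀ i : Fin n,
        ∑ j : Fin (pr i), (if j.val = 0 then ((n : ℝ))⁻¹ else 0) = (n : ℝ)⁻¹ := by
      intro i
      rw [Fin.sum_univ_eq_sum_range (fun v => if v = 0 then ((n : ℝ))⁻¹ else 0)]
      rw [Finset.sum_ite_eq' (Finset.range (pr i)) 0]
      simp [pr_pos i]
    rw [Finset.sum_congr rfl fun i _ => hinner i]
    rw [Finset.sum_const, nsmul_eq_mul]
    simp only [Finset.card_univ, Fintype.card_fin]
    rw [mul_inv_cancel₀]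
    exact Nat.cast_ne_zero.mpr hn.ne'
  rw [h3]
  simp

lemma Fδ_sum (n : ℕ) (hn : 0 < n) (st : FSt n) (act : Bool) : ∑ t, Fδ n st act t = 1 := by
  rcases st with ⟨i, j⟩ | i <;> simp only [Fδ] <;> (try split_ifs) <;>
    first
      | exact mix2_sum _ _
      | exact dirac_sum _
      | exact Fδ_unif_sum n hn

/-- Observation function of `F(n)`: all loop states share the observation `0`;
`s0`, `bad`, `target` have their own observations `1`, `2`, `3`. -/
def Fobs (n : ℕ) : FSt n → Fin 4
  | Sum.inl _ => 0
  | Sum.inr i => i.succ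

/-- The POMDP `F(n)`. -/
def FPOMDP (n : ℕ) (hn : 0 < n) : POMDP (FSt n) Bool (Fin 4) where
  δ := Fδ n
  δ_nonneg := Fδ_nonneg n
  δ_sum := Fδ_sum n hn
  obs := Fobs n
  init := dirac (Sum.inr 0)
  init_nonneg := dirac_nonneg _
  init_sum := dirac_sum _
  init_obs := by
    intro s s' hs hs'
    have h1 : s = Sum.inr 0 := by
      by_contra hc; simp [dirac, hc] at hs
    have h2 : s' = Sum.inr 0 := by
      by_contra hc; simp [dirac, hc] at hs'
    rw [h1, h2]

/-- The cost function of `F(n)`: every transition has cost `1` except the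
self-loops at `target`, which have cost `0`. -/
def Fcost (n : ℕ) : FSt n → Bool → ℝ :=
  fun st _ => if st = Sum.inr 2 then 0 else 1

/-- The target set of `F(n)`. -/
def FTarget (n : ℕ) : Set (FSt n) := {Sum.inr 2}


/-!
From a loop state other than the last one of its loop, `#` leads to `bad` with probability one;
as `bad` and `target` are distinct absorbing states, an almost-sure winning strategy gives `#`
probability zero there. All loop states share one observation, so after `k` steps `a` inside a
loop the strategy cannot tell which loop it is in: it may play `#` only if `p(i) ∣ k + 1` for
every `i`, that is, only if `p*_n ≤ k + 1`. Hence `target` is never reached within `p*_n` steps,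
and the probability in question is zero.
-/

lemma obsHist_cons_eq {S A Z : Type} {O : S → Z} {s t s' t' : S} {a : A} {l l' : List (A × S)}
    (hs : O s = O t) (h : obsHist O (s', l) = obsHist O (t', l')) :
    obsHist O (s, (a, s') :: l) = obsHist O (t, (a, t') :: l') := by
  simp_all [obsHist]

namespace POMDP

variable {S A Z : Type}

lemma visitsT_cons_iff {T : Set S} {s s' : S} {a : A} {l : List (A × S)} :
    visitsT T (s, (a, s') :: l) ↔ s ∈ T ∨ visitsT T (s', l) := by
  simp only [visitsT, List.mem_cons, exists_eq_or_imp]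

lemma visitsT_cons {T : Set S} {h : Hist S A} (hT : visitsT T h) (a : A) (s : S) :
    visitsT T (s, (a, h.1) :: h.2) :=
  visitsT_cons_iff.2 (Or.inr hT)

lemma visitsT_nil {T : Set S} {s : S} : visitsT T ((s, []) : Hist S A) ↔ s ∈ T := by
  simp [visitsT]

def histOf {m : ℕ} (x : S × List.Vector (A × S) m) : Hist S A := (x.1, x.2.toList)

lemma histOf_injective (m : ℕ) : Function.Injective (histOf (S := S) (A := A) (m := m)) := by
  rintro ⟨s, v⟩ ⟨s', v'⟩ h
  simp only [histOf, Prod.mk.injEq] at h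
  exact Prod.ext h.1 (List.Vector.toList_injective h.2)

def consEquiv (m : ℕ) :
    (S × A) × (S × List.Vector (A × S) m) ≃ S × List.Vector (A × S) (m + 1) where
  toFun y := (y.1.1, (y.1.2, y.2.1) ::ᵥ y.2.2)
  invFun x := ((x.1, x.2.head.1), (x.2.head.2, x.2.tail))
  left_inv := by rintro ⟨⟨s, a⟩, ⟨s', v⟩⟩; simp
  right_inv := by rintro ⟨s, v⟩; simp [List.Vector.cons_head_tail]

variable [Fintype S] [Fintype A] [Fintype Z]

lemma sum_histOf_succ (f : Hist S A → ℝ) (m : ℕ) :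
    ∑ y : S × List.Vector (A × S) (m + 1), f (histOf y) =
      ∑ x : S × List.Vector (A × S) m, ∑ sa : S × A, f (sa.1, (sa.2, x.1) :: x.2.toList) := by
  rw [← Equiv.sum_comp (consEquiv m), Fintype.sum_prod_type, Finset.sum_comm]
  rfl

lemma Absorbing.δ_eq_zero {M : POMDP S A Z} {T : Set S} (hT : M.Absorbing T) {t t' : S}
    (ht : t ∈ T) (a : A) (ht' : t' ≠ t) : M.δ t a t' = 0 := by
  have hrest : ∑ s ∈ univ.erase t, M.δ t a s = 0 := by
    linarith [add_sum_erase univ (M.δ t a) (mem_univ t), M.δ_sum t a, hT t ht a]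
  exact (sum_eq_zero_iff_of_nonneg fun s _ => M.δ_nonneg t a s).1 hrest t' (by simp [ht'])

variable (M : POMDP S A Z) (σ : Strategy S A Z M.obs)

lemma hprob_zero_nil (s : S) : M.hprob σ 0 (s, []) = M.init s := rfl

lemma hprob_succ_nil (m : ℕ) (s : S) : M.hprob σ (m + 1) (s, []) = 0 := rfl

lemma hprob_succ_cons (m : ℕ) (s s' : S) (a : A) (l : List (A × S)) :
    M.hprob σ (m + 1) (s, (a, s') :: l) = M.hprob σ m (s', l) * σ.act (s', l) a * M.δ s' a s :=
  rfl

variable {M σ} in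
lemma hprob_ne_zero_cons {m : ℕ} {s s' : S} {a : A} {l : List (A × S)}
    (hh : M.hprob σ m (s, (a, s') :: l) ≠ 0) :
    ∃ m', m = m' + 1 ∧ M.hprob σ m' (s', l) ≠ 0 ∧ σ.act (s', l) a ≠ 0 ∧ M.δ s' a s ≠ 0 := by
  cases m with
  | zero => exact absurd rfl hh
  | succ m =>
    rw [hprob_succ_cons] at hh
    simp only [mul_ne_zero_iff] at hh
    exact ⟨m, rfl, hh.1.1, hh.1.2, hh.2⟩

lemma hprob_nonneg (m : ℕ) (h : Hist S A) : 0 ≤ M.hprob σ m h := by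
  obtain ⟨s, l⟩ := h
  induction l generalizing m s with
  | nil => cases m <;> simp [hprob_zero_nil, hprob_succ_nil, M.init_nonneg]
  | cons p l ih =>
    cases m with
    | zero => exact le_rfl
    | succ m =>
      rw [hprob_succ_cons]
      exact mul_nonneg (mul_nonneg (ih m _) (σ.act_nonneg _ _)) (M.δ_nonneg _ _ _)

variable {M σ} in
lemma length_eq_of_hprob_ne_zero {m : ℕ} {h : Hist S A} (hh : M.hprob σ m h ≠ 0) :
    h.2.length = m := by
  obtain ⟨s, l⟩ := h
  induction l generalizing m s with
  | nil => cases m <;> simp_all [hprob_succ_nil]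
  | cons p l ih =>
    obtain ⟨m, rfl, hh, -⟩ := hprob_ne_zero_cons hh
    simpa using ih _ hh

variable {M σ} in
lemma mem_of_visitsT_of_hprob_ne_zero {T : Set S} (hT : M.Absorbing T) {m : ℕ} {h : Hist S A}
    (hh : M.hprob σ m h ≠ 0) (hv : visitsT T h) : h.1 ∈ T := by
  obtain ⟨s, l⟩ := h
  induction l generalizing m s with
  | nil => exact visitsT_nil.1 hv
  | cons p l ih =>
    obtain ⟨m, rfl, hh, -, hδ⟩ := hprob_ne_zero_cons hh
    refine (visitsT_cons_iff.1 hv).elim id fun hv' => ?_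
    have hs' : p.2 ∈ T := ih _ hh hv'
    by_contra hs
    exact hδ (hT.δ_eq_zero hs' p.1 (by rintro rfl; exact hs hs'))

lemma hprob_ne_zero_mem_range_histOf {m : ℕ} {h : Hist S A} (hh : M.hprob σ m h ≠ 0) :
    h ∈ Set.range (histOf (m := m)) :=
  ⟨(h.1, ⟨h.2, length_eq_of_hprob_ne_zero hh⟩), rfl⟩

lemma sum_mul_act_mul_δ (h : Hist S A) (w : ℝ) :
    ∑ sa : S × A, w * σ.act h sa.2 * M.δ h.1 sa.2 sa.1 = w := by
  simp_rw [Fintype.sum_prod_type_right, mul_assoc, ← mul_sum, M.δ_sum, mul_one, σ.act_sum,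
    mul_one]

lemma sum_hprob (m : ℕ) : ∑ x : S × List.Vector (A × S) m, M.hprob σ m (histOf x) = 1 := by
  induction m with
  | zero =>
    simp [Fintype.sum_prod_type, histOf, List.Vector.toList_empty, hprob_zero_nil, M.init_sum]
  | succ m ih =>
    rw [sum_histOf_succ]
    exact (Finset.sum_congr rfl fun x _ => M.sum_mul_act_mul_δ σ (histOf x) _).trans ih

def probEvent (P : Hist S A → Prop) (m : ℕ) : ℝ :=
  ∑ x : S × List.Vector (A × S) m, if P (histOf x) then M.hprob σ m (histOf x) else 0

lemma probEvent_nonneg (P : Hist S A → Prop) (m : ℕ) : 0 ≤ M.probEvent σ P m :=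
  sum_nonneg fun x _ => by split_ifs <;> simp [M.hprob_nonneg σ]

lemma probReachBy_eq_probEvent (T : Set S) (m : ℕ) :
    M.probReachBy T σ m = M.probEvent σ (visitsT T) m := by
  rw [probReachBy, ← (histOf_injective m).tsum_eq, tsum_fintype]
  · rfl
  intro h hh
  refine M.hprob_ne_zero_mem_range_histOf σ fun h0 => hh ?_
  simp [h0]

lemma hprob_le_probEvent {P : Hist S A → Prop} {m : ℕ} {h : Hist S A} (hP : P h) :
    M.hprob σ m h ≤ M.probEvent σ P m := by
  by_cases h0 : M.hprob σ m h = 0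
  · exact h0 ▸ M.probEvent_nonneg σ P m
  obtain ⟨x, rfl⟩ := M.hprob_ne_zero_mem_range_histOf σ h0
  have := single_le_sum (f := fun y => if P (histOf y) then M.hprob σ m (histOf y) else 0)
    (fun y _ => by split_ifs <;> simp [M.hprob_nonneg σ]) (mem_univ x)
  simpa [hP, probEvent] using this

lemma probEvent_add_le_one {P Q : Hist S A → Prop} {m : ℕ}
    (hPQ : ∀ h, M.hprob σ m h ≠ 0 → P h → ¬Q h) :
    M.probEvent σ P m + M.probEvent σ Q m ≤ 1 := by
  rw [← M.sum_hprob σ m, probEvent, probEvent, ← sum_add_distrib]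
  gcongr with x
  have := M.hprob_nonneg σ m (histOf x)
  by_cases h0 : M.hprob σ m (histOf x) = 0
  · simp [h0]
  have := hPQ _ h0
  split_ifs <;> simp_all

lemma probEvent_mono {P : Hist S A → Prop} (hP : ∀ h a s, P h → P (s, (a, h.1) :: h.2)) :
    Monotone (M.probEvent σ P) := by
  refine monotone_nat_of_le_succ fun m => ?_
  calc M.probEvent σ P m
      = ∑ x : S × List.Vector (A × S) m, ∑ sa : S × A,
          (if P (histOf x) then M.hprob σ m (histOf x) else 0) *
            σ.act (histOf x) sa.2 * M.δ x.1 sa.2 sa.1 :=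
        sum_congr rfl fun x _ => (M.sum_mul_act_mul_δ σ (histOf x) _).symm
    _ ≤ ∑ x : S × List.Vector (A × S) m, ∑ sa : S × A,
          if P (sa.1, (sa.2, x.1) :: x.2.toList)
          then M.hprob σ (m + 1) (sa.1, (sa.2, x.1) :: x.2.toList) else 0 := by
        gcongr with x _ sa
        by_cases hx : P (histOf x)
        · rw [if_pos hx]
          exact (if_pos (hP (histOf x) sa.2 sa.1 hx)).symm.le
        · simp only [hx, if_false, zero_mul]
          split_ifs <;> simp [M.hprob_nonneg σ]
    _ = M.probEvent σ P (m + 1) :=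
        (sum_histOf_succ (fun h => if P h then M.hprob σ (m + 1) h else 0) m).symm

theorem probReach_le_one_sub_hprob {T : Set S} {b : S} (hT : M.Absorbing T)
    (hb : M.Absorbing {b}) (hbT : b ∉ T) (m : ℕ) (l : List (A × S)) :
    M.probReach T σ ≤ 1 - M.hprob σ m (b, l) := by
  refine ciSup_le fun k => ?_
  have hdisj : ∀ h, M.hprob σ (max k m) h ≠ 0 → visitsT T h → ¬visitsT {b} h :=
    fun h hh hvT hvb => hbT <|
      mem_of_visitsT_of_hprob_ne_zero hb hh hvb ▸ mem_of_visitsT_of_hprob_ne_zero hT hh hvT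
  have hreach := M.probEvent_mono σ (P := visitsT T) (fun h a s hv => visitsT_cons hv a s)
    (le_max_left k m)
  have hbad := M.probEvent_mono σ (P := visitsT {b}) (fun h a s hv => visitsT_cons hv a s)
    (le_max_right k m)
  have hb0 : M.hprob σ m (b, l) ≤ M.probEvent σ (visitsT {b}) m :=
    M.hprob_le_probEvent σ (Or.inl (Set.mem_singleton b))
  rw [probReachBy_eq_probEvent]
  linarith [M.probEvent_add_le_one σ hdisj]

end POMDP

lemma dvd_add_one_of_mod_eq_sub_one {p k : ℕ} (hp : 0 < p) (h : k % p = p - 1) : p ∣ k + 1 :=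
  ⟨k / p + 1, by have := Nat.div_add_mod k p; rw [mul_add, mul_one]; omega⟩

lemma pstar_dvd_of_forall_pr_dvd {n k : ℕ} (h : ∀ i < n, pr i ∣ k) : pstar n ∣ k := by
  refine Finset.prod_dvd_of_isRelPrime (fun a _ b _ hab => ?_) fun i hi => h i (mem_range.1 hi)
  refine Nat.coprime_iff_isRelPrime.1 ((Nat.coprime_primes (Nat.prime_nth_prime a)
    (Nat.prime_nth_prime b)).2 fun he => hab ?_)
  exact Nat.nth_injective Nat.infinite_setOfPred_prime he

namespace FPOMDP

variable {n : ℕ}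

/-- The state `q^i_{(k mod p(i)) + 1}` of the paper, reached in loop `i` after `k` steps `a`. -/
def loopState (i : Fin n) (k : ℕ) : FSt n := Sum.inl ⟨i, ⟨k % pr i, Nat.mod_lt _ (pr_pos i)⟩⟩

lemma Fδ_inr_self {c : Fin 3} (hc : c ≠ 0) (a : Bool) : Fδ n (Sum.inr c) a (Sum.inr c) = 1 := by
  fin_cases c <;> simp_all [Fδ, dirac]

lemma absorbing_target (hn : 0 < n) : (FPOMDP n hn).Absorbing (FTarget n) := by
  rintro t rfl a
  exact Fδ_inr_self (n := n) (c := 2) (by decide) a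

lemma absorbing_bad (hn : 0 < n) : (FPOMDP n hn).Absorbing {Sum.inr 1} := by
  rintro t rfl a
  exact Fδ_inr_self (n := n) (c := 1) (by decide) a

lemma Fδ_loopState_succ (i : Fin n) (k : ℕ) :
    Fδ n (loopState i k) true (loopState i (k + 1)) ≠ 0 := by
  simp [Fδ, loopState, mix2, Nat.add_mod]

lemma Fδ_init_loopState_zero (hn : 0 < n) (i : Fin n) :
    Fδ n (Sum.inr 0) false (loopState i 0) ≠ 0 := by
  simp [Fδ, loopState, hn.ne']

lemma Fδ_to_bad {i : Fin n} {j : Fin (pr i)} (hj : j.val ≠ pr i - 1) :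
    Fδ n (Sum.inl ⟨i, j⟩) false (Sum.inr 1) ≠ 0 := by
  simp [Fδ, hj, dirac]

lemma Fδ_ne_zero_inl {s : FSt n} {a : Bool} {i : Fin n} {j : Fin (pr i)}
    (h : Fδ n s a (Sum.inl ⟨i, j⟩) ≠ 0) :
    (s = Sum.inr 0 ∧ a = false ∧ j.val = 0) ∨
      (a = true ∧ ∃ j' : Fin (pr i), s = Sum.inl ⟨i, j'⟩ ∧ j.val = (j'.val + 1) % pr i) := by
  rcases s with ⟨i', j'⟩ | c
  · cases a
    · simp only [Fδ] at h
      split_ifs at h <;> simp_all [mix2, dirac]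
    · simp only [Fδ, if_true, mix2, ne_eq] at h
      simp only [Sum.inl.injEq, Sigma.mk.injEq, reduceCtorEq, if_false, add_zero, ite_eq_right_iff,
        one_div, inv_eq_zero, OfNat.ofNat_ne_zero, imp_false, not_not] at h
      obtain ⟨rfl, hj⟩ := h
      exact Or.inr ⟨rfl, j', rfl, by rw [eq_of_heq hj]⟩
  · fin_cases c <;> cases a <;> simp_all [Fδ, dirac]

lemma Fδ_ne_zero_target {s : FSt n} {a : Bool} (h : Fδ n s a (Sum.inr 2) ≠ 0) :
    s = Sum.inr 2 ∨ ∃ (i : Fin n) (j : Fin (pr i)), s = Sum.inl ⟨i, j⟩ ∧ a = false := by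
  rcases s with ⟨i, j⟩ | c
  · cases a <;> simp only [Fδ] at h <;> split_ifs at h <;> simp_all [mix2, dirac]
  · fin_cases c <;> cases a <;> simp_all [Fδ, dirac]

variable (hn : 0 < n) (σ : Strategy (FSt n) Bool (Fin 4) (FPOMDP n hn).obs)

lemma eq_s0_of_hprob_zero_ne_zero {s : FSt n} (hh : (FPOMDP n hn).hprob σ 0 (s, []) ≠ 0) :
    s = Sum.inr 0 := by
  by_contra hs
  exact hh (if_neg hs)

/-- Since all loop states share one observation, a history ending in loop `i` after `k` steps `a`
is indistinguishable from one ending in any other loop `i'` after `k` steps `a`. -/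
lemma exists_phase {m : ℕ} {i : Fin n} {j : Fin (pr i)} {l : List (Bool × FSt n)}
    (hh : (FPOMDP n hn).hprob σ m (Sum.inl ⟨i, j⟩, l) ≠ 0) :
    ∃ k < m, j.val = k % pr i ∧ ∀ i', ∃ l', (FPOMDP n hn).hprob σ m (loopState i' k, l') ≠ 0 ∧
      obsHist (FPOMDP n hn).obs (loopState i' k, l') =
        obsHist (FPOMDP n hn).obs (Sum.inl ⟨i, j⟩, l) := by
  induction l generalizing m i j with
  | nil =>
    cases m with
    | zero => exact absurd (eq_s0_of_hprob_zero_ne_zero hn σ hh) Sum.inl_ne_inr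
    | succ m => exact absurd ((FPOMDP n hn).hprob_succ_nil σ m _) hh
  | cons p rest ih =>
    obtain ⟨m, rfl, h1, h2, h3⟩ := POMDP.hprob_ne_zero_cons hh
    rcases Fδ_ne_zero_inl h3 with ⟨hs, ha, hj⟩ | ⟨ha, j', hs, hj⟩
    · obtain ⟨a, s'⟩ := p
      subst hs ha
      refine ⟨0, m.succ_pos, by simp [hj], fun i' => ⟨(false, Sum.inr 0) :: rest, ?_, rfl⟩⟩
      rw [POMDP.hprob_succ_cons]
      exact mul_ne_zero (mul_ne_zero h1 h2) (Fδ_init_loopState_zero hn i')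
    · obtain ⟨a, s'⟩ := p
      subst hs ha
      obtain ⟨k, hkm, hj', hcomp⟩ := ih h1
      refine ⟨k + 1, by omega, by rw [hj, hj', Nat.mod_add_mod], fun i' => ?_⟩
      obtain ⟨l', hl', hobs⟩ := hcomp i'
      refine ⟨(true, loopState i' k) :: l', ?_, obsHist_cons_eq rfl hobs⟩
      rw [POMDP.hprob_succ_cons, σ.obsBased _ _ hobs]
      exact mul_ne_zero (mul_ne_zero hl' h2) (Fδ_loopState_succ i' k)

variable {hn σ}

lemma val_eq_pred_of_act_false_ne_zero (hAS : (FPOMDP n hn).AlmostSure (FTarget n) σ) {m : ℕ}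
    {i : Fin n} {j : Fin (pr i)} {l : List (Bool × FSt n)}
    (hh : (FPOMDP n hn).hprob σ m (Sum.inl ⟨i, j⟩, l) ≠ 0)
    (ha : σ.act (Sum.inl ⟨i, j⟩, l) false ≠ 0) : j.val = pr i - 1 := by
  by_contra hj
  have hbad : (FPOMDP n hn).hprob σ (m + 1) (Sum.inr 1, (false, Sum.inl ⟨i, j⟩) :: l) ≠ 0 :=
    mul_ne_zero (mul_ne_zero hh ha) (Fδ_to_bad hj)
  have hle := (FPOMDP n hn).probReach_le_one_sub_hprob σ (absorbing_target hn) (absorbing_bad hn)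
    (by simp [FTarget]) (m + 1) ((false, Sum.inl ⟨i, j⟩) :: l)
  have hreach : (FPOMDP n hn).probReach (FTarget n) σ = 1 := hAS
  exact hbad (le_antisymm (by linarith) ((FPOMDP n hn).hprob_nonneg σ _ _))

lemma pstar_le_of_act_false_ne_zero (hAS : (FPOMDP n hn).AlmostSure (FTarget n) σ) {m : ℕ}
    {i : Fin n} {j : Fin (pr i)} {l : List (Bool × FSt n)}
    (hh : (FPOMDP n hn).hprob σ m (Sum.inl ⟨i, j⟩, l) ≠ 0)
    (ha : σ.act (Sum.inl ⟨i, j⟩, l) false ≠ 0) : pstar n ≤ m := by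
  obtain ⟨k, hkm, -, hcomp⟩ := exists_phase hn σ hh
  have hdvd : ∀ i' < n, pr i' ∣ k + 1 := fun i' hi' => by
    obtain ⟨l', hl', hobs⟩ := hcomp ⟨i', hi'⟩
    exact dvd_add_one_of_mod_eq_sub_one (pr_pos i')
      (val_eq_pred_of_act_false_ne_zero hAS hl' (σ.obsBased _ _ hobs ▸ ha))
  exact (Nat.le_of_dvd k.succ_pos (pstar_dvd_of_forall_pr_dvd hdvd)).trans hkm

lemma exists_act_false_of_visitsT_target {m : ℕ} {h : Hist (FSt n) Bool}
    (hh : (FPOMDP n hn).hprob σ m h ≠ 0) (hv : POMDP.visitsT (FTarget n) h) :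
    ∃ m' < m, ∃ (i : Fin n) (j : Fin (pr i)) (l : List (Bool × FSt n)),
      (FPOMDP n hn).hprob σ m' (Sum.inl ⟨i, j⟩, l) ≠ 0 ∧ σ.act (Sum.inl ⟨i, j⟩, l) false ≠ 0 := by
  obtain ⟨s, l⟩ := h
  induction l generalizing m s with
  | nil =>
    cases m with
    | zero =>
      obtain rfl := eq_s0_of_hprob_zero_ne_zero hn σ hh
      exact absurd (POMDP.visitsT_nil.1 hv) (by simp [FTarget])
    | succ m => exact absurd ((FPOMDP n hn).hprob_succ_nil σ m _) hh
  | cons p rest ih =>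
    obtain ⟨a, s'⟩ := p
    obtain ⟨m, rfl, h1, h2, h3⟩ := POMDP.hprob_ne_zero_cons hh
    have hcases : POMDP.visitsT (FTarget n) (s', rest) ∨
        ∃ (i : Fin n) (j : Fin (pr i)), s' = Sum.inl ⟨i, j⟩ ∧ a = false := by
      rcases POMDP.visitsT_cons_iff.1 hv with rfl | hv'
      · exact (Fδ_ne_zero_target h3).imp Or.inl id
      · exact Or.inl hv'
    rcases hcases with hv' | ⟨i, j, rfl, rfl⟩
    · obtain ⟨m', hm', hrest⟩ := ih _ h1 hv'
      exact ⟨m', hm'.trans m.lt_succ_self, hrest⟩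
    · exact ⟨m, m.lt_succ_self, i, j, rest, h1, h2⟩

lemma pstar_lt_of_visitsT_target (hAS : (FPOMDP n hn).AlmostSure (FTarget n) σ) {m : ℕ}
    {h : Hist (FSt n) Bool} (hh : (FPOMDP n hn).hprob σ m h ≠ 0)
    (hv : POMDP.visitsT (FTarget n) h) : pstar n < m := by
  obtain ⟨m', hm', i, j, l, hh', ha⟩ := exists_act_false_of_visitsT_target hh hv
  exact (pstar_le_of_act_false_ne_zero hAS hh' ha).trans_lt hm'

end FPOMDP

/-- In `F(n)`, for every almost-sure winning strategy the
probability of reaching `target` within the first `p*_n` steps is at most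
`(1/2)·(1/2)^{p*_n}`. -/
theorem FPOMDP_reach_prob_le (n : ℕ) (hn : 0 < n)
    (σ : Strategy (FSt n) Bool (Fin 4) (FPOMDP n hn).obs)
    (hAS : (FPOMDP n hn).AlmostSure (FTarget n) σ) :
    (FPOMDP n hn).probReachBy (FTarget n) σ (pstar n) ≤
      (1 / 2) * (1 / 2 : ℝ) ^ pstar n := by
  have hzero : (FPOMDP n hn).probReachBy (FTarget n) σ (pstar n) = 0 := by
    refine (tsum_congr fun h => ?_).trans tsum_zero
    split_ifs with hv
    · by_contra hh
      exact lt_irrefl _ (FPOMDP.pstar_lt_of_visitsT_target hAS hh hv)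
    · rfl
  rw [hzero]
  positivity
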